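/- Shared-background subtraction: for tokens t_s ≠ t_b, rationals slo ≤ shi and blo ≤ bhi, and dimension tag d, the expression Sub (Add (Meas t_s slo shi d) (Meas t_b blo bhi d)) (Meas t_b blo bhi d) is interchangeable with Meas t_s slo shi d. -/

import Mathlib

abbrev Token := ℕ

inductive Dim where
  | base
deriving DecidableEq

inductive Expr where
  | Exact (q : ℚ) (d : Dim)
  | Meas (t : Token) (lo hi : ℚ) (d : Dim)
  | Add (a b : Expr)
  | Sub (a b : Expr)
  | Mul (a b : Expr)
  | Div (a b : Expr)
  | Neg (a : Expr)

abbrev TokenEnv := Token → ℚ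

def TokenConsistent (σ : TokenEnv) : Expr → Prop
  | .Exact _ _ => True
  | .Meas t lo hi _ => lo ≤ σ t ∧ σ t ≤ hi
  | .Add a b => TokenConsistent σ a ∧ TokenConsistent σ b
  | .Sub a b => TokenConsistent σ a ∧ TokenConsistent σ b
  | .Mul a b => TokenConsistent σ a ∧ TokenConsistent σ b
  | .Div a b => TokenConsistent σ a ∧ TokenConsistent σ b
  | .Neg a => TokenConsistent σ a

def eval (σ : TokenEnv) : Expr → ℚ
  | .Exact q _ => q
  | .Meas t _ _ _ => σ t
  | .Add a b => eval σ a + eval σ b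
  | .Sub a b => eval σ a - eval σ b
  | .Mul a b => eval σ a * eval σ b
  | .Div a b => eval σ a / eval σ b
  | .Neg a => - eval σ a

def Encl (e : Expr) : Set ℚ := {v : ℚ | ∃ σ : TokenEnv, TokenConsistent σ e ∧ eval σ e = v}

def RewritesTo (e e' : Expr) : Prop := Encl e' ⊆ Encl e

def Interchangeable (e e' : Expr) : Prop := Encl e = Encl e'

def OneWayOnly (e e' : Expr) : Prop := RewritesTo e e' ∧ ¬ RewritesTo e' e

lemma eval_sub_add_cancel (σ : TokenEnv) (a b : Expr) :
    eval σ (.Sub (.Add a b) b) = eval σ a := by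
  simp only [eval, add_sub_cancel_right]

lemma encl_sub_add_cancel_subset (a b : Expr) : Encl (.Sub (.Add a b) b) ⊆ Encl a := by
  rintro _ ⟨σ, ⟨⟨ha, _⟩, _⟩, rfl⟩
  exact ⟨σ, ha, (eval_sub_add_cancel σ a b).symm⟩

lemma encl_sub_add_cancel (a b : Expr)
    (h : ∀ σ, TokenConsistent σ a →
      ∃ σ', TokenConsistent σ' a ∧ TokenConsistent σ' b ∧ eval σ' a = eval σ a) :
    Encl (.Sub (.Add a b) b) = Encl a := by
  refine (encl_sub_add_cancel_subset a b).antisymm ?_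
  rintro _ ⟨σ, ha, rfl⟩
  obtain ⟨σ', ha', hb', heq⟩ := h σ ha
  exact ⟨σ', ⟨⟨ha', hb'⟩, hb'⟩, (eval_sub_add_cancel σ' a b).trans heq⟩

lemma tokenConsistent_meas_update_of_ne {ts tb : Token} (hne : ts ≠ tb) (σ : TokenEnv)
    (x lo hi : ℚ) (d : Dim) :
    TokenConsistent (Function.update σ tb x) (.Meas ts lo hi d) ↔
      TokenConsistent σ (.Meas ts lo hi d) := by
  simp only [TokenConsistent, Function.update_of_ne hne]

lemma eval_meas_update_of_ne {ts tb : Token} (hne : ts ≠ tb) (σ : TokenEnv)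
    (x lo hi : ℚ) (d : Dim) :
    eval (Function.update σ tb x) (.Meas ts lo hi d) = eval σ (.Meas ts lo hi d) := by
  simp only [eval, Function.update_of_ne hne]

lemma tokenConsistent_meas_update_self (σ : TokenEnv) (t : Token) {lo hi : ℚ} (h : lo ≤ hi)
    (d : Dim) : TokenConsistent (Function.update σ t lo) (.Meas t lo hi d) := by
  simp only [TokenConsistent, Function.update_self, le_refl, h, and_self]

theorem shared_offset_subtraction_interchangeable_signal_general
    (ts tb : Token) (hne : ts ≠ tb) (slo shi blo bhi : ℚ)
    (hb : blo ≤ bhi) (d : Dim) :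
    Interchangeable
      (.Sub (.Add (.Meas ts slo shi d) (.Meas tb blo bhi d)) (.Meas tb blo bhi d))
      (.Meas ts slo shi d) := by
  refine encl_sub_add_cancel _ _ fun σ hs => ⟨Function.update σ tb blo, ?_, ?_, ?_⟩
  · exact (tokenConsistent_meas_update_of_ne hne σ blo slo shi d).mpr hs
  · exact tokenConsistent_meas_update_self σ tb hb d
  · exact eval_meas_update_of_ne hne σ blo slo shi d

theorem shared_offset_subtraction_interchangeable_signal
    (ts tb : Token) (hne : ts ≠ tb) (slo shi blo bhi : ℚ)
    (hs : slo ≤ shi) (hb : blo ≤ bhi) (d : Dim) :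
    Interchangeable
      (.Sub (.Add (.Meas ts slo shi d) (.Meas tb blo bhi d)) (.Meas tb blo bhi d))
      (.Meas ts slo shi d) :=
  shared_offset_subtraction_interchangeable_signal_general ts tb hne slo shi blo bhi hb d
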